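/- Symmetry reduction lemma: For a parameterised interleaved interpreted system T(n) and a formula φ(J) of ACTL*K_{-X} over agent indices J with |J| = k ≤ n, T(n) satisfies the conjunction of φ(C) over all k-tuples C of distinct agents if and only if T(n) satisfies the single instantiation φ({1,…,k}). -/

import Mathlib

-- State and path formulas of ACTL*K without next, in negation normal form,
-- with atoms and epistemic modalities indexed by agents in `A`.
mutual
inductive SForm (AP A : Type) : Type where
  | atom : AP → A → SForm AP A
  | natom : AP → A → SForm AP A
  | sand : SForm AP A → SForm AP A → SForm AP A
  | sor : SForm AP A → SForm AP A → SForm AP A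
  | know : A → SForm AP A → SForm AP A
  | aall : PForm AP A → SForm AP A

inductive PForm (AP A : Type) : Type where
  | ofState : SForm AP A → PForm AP A
  | pand : PForm AP A → PForm AP A → PForm AP A
  | por : PForm AP A → PForm AP A → PForm AP A
  | puntil : PForm AP A → PForm AP A → PForm AP A
  | prelease : PForm AP A → PForm AP A → PForm AP A
end

-- Renaming of agent indices in a formula.
mutual
def renameS {AP A B : Type} (f : A → B) : SForm AP A → SForm AP B
  | .atom p i => .atom p (f i)
  | .natom p i => .natom p (f i)
  | .sand φ ψ => .sand (renameS f φ) (renameS f ψ)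
  | .sor φ ψ => .sor (renameS f φ) (renameS f ψ)
  | .know i φ => .know (f i) (renameS f φ)
  | .aall φ => .aall (renameP f φ)

def renameP {AP A B : Type} (f : A → B) : PForm AP A → PForm AP B
  | .ofState φ => .ofState (renameS f φ)
  | .pand φ ψ => .pand (renameP f φ) (renameP f ψ)
  | .por φ ψ => .por (renameP f φ) (renameP f ψ)
  | .puntil φ ψ => .puntil (renameP f φ) (renameP f ψ)
  | .prelease φ ψ => .prelease (renameP f φ) (renameP f ψ)
end

/-- A model: global states, a transition relation, an initial state,
epistemic indistinguishability relations, and an indexed valuation. -/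
structure Model (AP A : Type) where
  G : Type
  R : G → G → Prop
  init : G
  eqv : A → G → G → Prop
  val : G → AP → A → Prop

def Model.ValidPath {AP A : Type} (M : Model AP A) (π : ℕ → M.G) : Prop :=
  ∀ j, M.R (π j) (π (j + 1))

def shiftPath {G : Type} (π : ℕ → G) (i : ℕ) : ℕ → G := fun j => π (i + j)

-- Satisfaction of state formulas at states and of path formulas on paths.
mutual
def ssat {AP A : Type} (M : Model AP A) : SForm AP A → M.G → Prop
  | .atom p i, g => M.val g p i
  | .natom p i, g => ¬ M.val g p i
  | .sand φ ψ, g => ssat M φ g ∧ ssat M ψ g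
  | .sor φ ψ, g => ssat M φ g ∨ ssat M ψ g
  | .know i φ, g => ∀ g', M.eqv i g g' → ssat M φ g'
  | .aall φ, g => ∀ π, M.ValidPath π → π 0 = g → psat M φ π

def psat {AP A : Type} (M : Model AP A) : PForm AP A → (ℕ → M.G) → Prop
  | .ofState φ, π => ssat M φ (π 0)
  | .pand φ ψ, π => psat M φ π ∧ psat M ψ π
  | .por φ ψ, π => psat M φ π ∨ psat M ψ π
  | .puntil φ ψ, π => ∃ i, psat M ψ (shiftPath π i) ∧ ∀ j < i, psat M φ (shiftPath π j)
  | .prelease φ ψ, π => ∀ i, (∀ j < i, ¬ psat M φ (shiftPath π j)) → psat M ψ (shiftPath π i)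
end

/-- A template agent: template states, initial state, synchronous and
asynchronous template actions (the silent action is treated separately),
protocol, deterministic evolution function, and labeling. -/
structure Template (AP : Type) where
  L : Type
  init : L
  SAct : Type
  AAct : Type
  protS : L → SAct → Prop
  protA : L → AAct → Prop
  tS : L → SAct → L
  tA : L → AAct → L
  lab : L → AP → Prop

/-- Global states of the instance `T(n)`: a template state per agent. -/
def GState {AP : Type} (T : Template AP) (n : ℕ) : Type := Fin n → T.L

/-- Concrete actions of `T(n)`: synchronous actions (shared by all agents),
asynchronous actions indexed by the unique agent performing them, and the
(joint) silent action. -/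
inductive CAct {AP : Type} (T : Template AP) (n : ℕ) : Type where
  | sync : T.SAct → CAct T n
  | async : T.AAct → Fin n → CAct T n
  | eps : CAct T n

/-- The global interleaved transition relation of `T(n)`: a synchronous
action is performed by all agents simultaneously, an asynchronous action by
exactly one agent (all others keep their state), and the silent action
leaves the global state unchanged. -/
def GTrans {AP : Type} (T : Template AP) (n : ℕ) :
    CAct T n → GState T n → GState T n → Prop
  | .sync s, g, g' => ∀ i, T.protS (g i) s ∧ g' i = T.tS (g i) s
  | .async b i, g, g' =>
      T.protA (g i) b ∧ g' i = T.tA (g i) b ∧ ∀ j, j ≠ i → g' j = g j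
  | .eps, g, g' => g' = g

/-- The initial global state of `T(n)`. -/
def GInit {AP : Type} (T : Template AP) (n : ℕ) : GState T n := fun _ => T.init

/-- Reachability from the initial state of `T(n)`. -/
def GReach {AP : Type} (T : Template AP) (n : ℕ) (g : GState T n) : Prop :=
  Relation.ReflTransGen (fun x y => ∃ a, GTrans T n a x y) (GInit T n) g

/-- The instance `T(n)` as a model: epistemic relations are given by equality
of the local component over the (reachable) global states, and atoms `p_i`
hold according to the template labeling of agent `i`'s local state. -/
def PIISModel {AP : Type} (T : Template AP) (n : ℕ) : Model AP (Fin n) where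
  G := GState T n
  R := fun g g' => ∃ a, GTrans T n a g g'
  init := GInit T n
  eqv := fun i g g' => GReach T n g' ∧ g i = g' i
  val := fun g p i => T.lab (g i) p

/-- `T(n) ⊨ φ`: satisfaction at the initial state. -/
def PIISsat {AP : Type} (T : Template AP) (n : ℕ) (φ : SForm AP (Fin n)) : Prop :=
  ssat (PIISModel T n) φ (PIISModel T n).init

/-!
Every permutation `σ` of the agents is an automorphism of `T(n)` that renames agents along `σ`:
permuting local components maps transitions to transitions (an asynchronous action of `i` to one
of `σ i`), hence preserves reachability and the epistemic relations, and fixes the initial state.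
Satisfaction is invariant under such renamings, so `T(n) ⊨ ψ ↔ T(n) ⊨ σ(ψ)`. Since any tuple
`C` of `k` distinct agents is `σ ∘ castLE` for some permutation `σ`, every `φ(C)` is a
permutation of `φ({1,…,k})`.
-/

variable {AP : Type}

mutual
theorem renameS_renameS {A B C : Type} (f : B → C) (g : A → B) :
    ∀ φ : SForm AP A, renameS f (renameS g φ) = renameS (f ∘ g) φ
  | .atom _ _ | .natom _ _ => rfl
  | .sand φ ψ | .sor φ ψ => by simp [renameS, renameS_renameS f g φ, renameS_renameS f g ψ]
  | .know _ φ => by simp [renameS, renameS_renameS f g φ]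
  | .aall φ => by simp [renameS, renameP_renameP f g φ]

theorem renameP_renameP {A B C : Type} (f : B → C) (g : A → B) :
    ∀ φ : PForm AP A, renameP f (renameP g φ) = renameP (f ∘ g) φ
  | .ofState φ => by simp [renameP, renameS_renameS f g φ]
  | .pand φ ψ | .por φ ψ | .puntil φ ψ | .prelease φ ψ => by
      simp [renameP, renameP_renameP f g φ, renameP_renameP f g ψ]
end

structure Model.RenamingEquiv {A B : Type} (f : A → B) (M : Model AP A) (N : Model AP B) where
  toEquiv : M.G ≃ N.G
  R_iff : ∀ g g', N.R (toEquiv g) (toEquiv g') ↔ M.R g g'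
  eqv_iff : ∀ i g g', N.eqv (f i) (toEquiv g) (toEquiv g') ↔ M.eqv i g g'
  val_iff : ∀ g p i, N.val (toEquiv g) p (f i) ↔ M.val g p i

namespace Model.RenamingEquiv

variable {A B : Type} {f : A → B} {M : Model AP A} {N : Model AP B} (E : RenamingEquiv f M N)

theorem validPath_comp_iff (π : ℕ → M.G) : N.ValidPath (E.toEquiv ∘ π) ↔ M.ValidPath π :=
  forall_congr' fun j => E.R_iff (π j) (π (j + 1))

mutual
theorem ssat_renameS_iff :
    ∀ (φ : SForm AP A) (g : M.G), ssat N (renameS f φ) (E.toEquiv g) ↔ ssat M φ g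
  | .atom p i, g => E.val_iff g p i
  | .natom p i, g => not_congr (E.val_iff g p i)
  | .sand φ ψ, g => and_congr (ssat_renameS_iff φ g) (ssat_renameS_iff ψ g)
  | .sor φ ψ, g => or_congr (ssat_renameS_iff φ g) (ssat_renameS_iff ψ g)
  | .know i φ, g => E.toEquiv.forall_congr_right.symm.trans <| forall_congr' fun g' =>
      imp_congr (E.eqv_iff i g g') (ssat_renameS_iff φ g')
  | .aall φ, _ => ((Equiv.refl ℕ).arrowCongr E.toEquiv).forall_congr_right.symm.trans <|
      forall_congr' fun π => imp_congr (E.validPath_comp_iff π) <|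
        imp_congr E.toEquiv.apply_eq_iff_eq (psat_renameP_iff φ π)

theorem psat_renameP_iff :
    ∀ (φ : PForm AP A) (π : ℕ → M.G), psat N (renameP f φ) (E.toEquiv ∘ π) ↔ psat M φ π
  | .ofState φ, π => ssat_renameS_iff φ (π 0)
  | .pand φ ψ, π => and_congr (psat_renameP_iff φ π) (psat_renameP_iff ψ π)
  | .por φ ψ, π => or_congr (psat_renameP_iff φ π) (psat_renameP_iff ψ π)
  | .puntil φ ψ, _ => exists_congr fun _ =>
      and_congr (psat_renameP_iff ψ _) (forall₂_congr fun _ _ => psat_renameP_iff φ _)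
  | .prelease φ ψ, _ => forall_congr' fun _ =>
      imp_congr (forall₂_congr fun _ _ => not_congr (psat_renameP_iff φ _))
        (psat_renameP_iff ψ _)
end

end Model.RenamingEquiv

namespace GState

variable {T : Template AP} {n : ℕ}

def perm (σ : Equiv.Perm (Fin n)) : GState T n ≃ GState T n :=
  σ.arrowCongr (Equiv.refl T.L)

@[simp]
theorem perm_apply (σ : Equiv.Perm (Fin n)) (g : GState T n) (i : Fin n) :
    perm σ g i = g (σ.symm i) :=
  rfl

theorem perm_apply_apply (σ : Equiv.Perm (Fin n)) (g : GState T n) (i : Fin n) :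
    perm σ g (σ i) = g i := by
  simp

theorem perm_symm (σ : Equiv.Perm (Fin n)) : (perm σ).symm = (perm σ.symm : GState T n ≃ _) :=
  rfl

end GState

def CAct.perm {T : Template AP} {n : ℕ} (σ : Equiv.Perm (Fin n)) : CAct T n → CAct T n
  | .sync s => .sync s
  | .async b i => .async b (σ i)
  | .eps => .eps

section Symmetry

variable {T : Template AP} {n : ℕ} (σ : Equiv.Perm (Fin n))

theorem GTrans.perm {a : CAct T n} {g g' : GState T n} (h : GTrans T n a g g') :
    GTrans T n (a.perm σ) (GState.perm σ g) (GState.perm σ g') := by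
  cases a with
  | sync s => exact fun i => h (σ.symm i)
  | async b i =>
    obtain ⟨hprot, hmove, hstay⟩ := h
    refine ⟨by simpa using hprot, by simpa using hmove, fun j hj => hstay _ ?_⟩
    rintro rfl
    simp at hj
  | eps => exact congrArg (GState.perm σ) h

theorem exists_gTrans_perm_iff {g g' : GState T n} :
    (∃ a, GTrans T n a (GState.perm σ g) (GState.perm σ g')) ↔ ∃ a, GTrans T n a g g' := by
  refine ⟨fun ⟨a, h⟩ => ⟨a.perm σ.symm, ?_⟩, fun ⟨a, h⟩ => ⟨a.perm σ, h.perm σ⟩⟩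
  simpa [← GState.perm_symm] using h.perm σ.symm

theorem GReach.perm {g : GState T n} (h : GReach T n g) : GReach T n (GState.perm σ g) := by
  induction h with
  | refl => exact .refl
  | tail _ hstep ih => exact ih.tail ((exists_gTrans_perm_iff σ).2 hstep)

theorem gReach_perm_iff {g : GState T n} : GReach T n (GState.perm σ g) ↔ GReach T n g :=
  ⟨fun h => by simpa [← GState.perm_symm] using h.perm σ.symm, GReach.perm σ⟩

def PIISModel.permRenamingEquiv : (PIISModel T n).RenamingEquiv σ (PIISModel T n) where
  toEquiv := GState.perm σ
  R_iff _ _ := exists_gTrans_perm_iff σ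
  eqv_iff i (g g' : GState T n) := and_congr (gReach_perm_iff σ) <|
    Eq.congr (GState.perm_apply_apply σ g i) (GState.perm_apply_apply σ g' i)
  val_iff (g : GState T n) p i :=
    iff_of_eq <| congrArg (T.lab · p) (GState.perm_apply_apply σ g i)

theorem PIISsat_renameS_perm_iff (φ : SForm AP (Fin n)) :
    PIISsat T n (renameS σ φ) ↔ PIISsat T n φ :=
  -- `GState.perm σ` fixes the constant state `GInit T n` definitionally.
  (PIISModel.permRenamingEquiv σ).ssat_renameS_iff φ (GInit T n)

end Symmetry

/-- Symmetry reduction: `T(n)` satisfies the conjunction of the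
instantiations `φ(C)` over all `|J| = k`-tuples `C` of pairwise distinct
agents iff `T(n)` satisfies the single instantiation `φ({1,…,k})` given by
the canonical inclusion of `{1,…,k}` into `{1,…,n}`. -/
theorem symmetry_reduction {AP : Type} (T : Template AP) (n k : ℕ)
    (hkn : k ≤ n) (φ : SForm AP (Fin k)) :
    (∀ C : Fin k ↪ Fin n, PIISsat T n (renameS (⇑C) φ)) ↔
      PIISsat T n (renameS (Fin.castLE hkn) φ) := by
  refine ⟨fun h => h (Fin.castLEEmb hkn), fun h C => ?_⟩
  obtain ⟨σ, hσ⟩ :=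
    Equiv.Perm.exists_extending_pair _ _ (Fin.castLE_injective hkn) C.injective
  have hC : ⇑C = σ ∘ Fin.castLE hkn := funext fun x => (hσ x).symm
  rwa [hC, ← renameS_renameS, PIISsat_renameS_perm_iff]
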